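/- arXiv:1201.2322 — 7 statements merged into one kernel-verified Lean document; each statement's English description precedes it below -/
import Mathlib

section
/- Let k ≥ 12 be an even integer, let w = k−2, and let P be an odd polynomial with complex coefficients of degree at most k−3 such that P(x) + x^w·P(−1/x) = 0 for all complex x ≠ 0, and P(x) + x^w·P(1 − 1/x) + (x−1)^w·P(−1/(x−1)) = 0 for all complex x ∉ {0,1}. Then P(0) = P(2) = P(−2) = P(1/2) = P(−1/2) = 0, and moreover P(1) = P'(1) = P(−1) = P'(−1) = 0 (i.e. P has zeros of multiplicity at least 2 at 1 and −1, unless it vanishes there identically by being zero). -/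
/-! Since `P` is odd, the relation `P|(1+S) = 0` says that `P` is palindromic of weight `w`,
`P = X^w P(1/X)`, and then `P|(1+U+U²) = 0` becomes the polynomial identity
`P + X^w P(1 - 1/X) + P(1 - X) = 0`. At `X = 0` its middle term is the coefficient of `X^w` in
`P(1 - X)`, which vanishes as `deg P < w`, so `P(1) = -P(0) = 0`; at `X = -1` it reads
`P(-1) + 2 P(2) = 0`. Palindromy carries the zero at `2` to `1/2`, and differentiating it gives
`2 P'(1) = w P(1)`. Oddness gives the remaining points. -/

open Polynomial

namespace Polynomial

theorem eq_zero_of_eval_eq_zero_off_finite {R : Type*} [CommRing R] [IsDomain R] [Infinite R]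
    {p : R[X]} {s : Set R} (hs : s.Finite) (h : ∀ x ∉ s, p.eval x = 0) : p = 0 :=
  p.eq_zero_of_infinite_isRoot (hs.infinite_compl.mono h)

theorem eval_reflect {K : Type*} [Field K] {N : ℕ} {f : K[X]} (hf : f.natDegree ≤ N)
    {x : K} (hx : x ≠ 0) : (reflect N f).eval x = x ^ N * f.eval x⁻¹ := by
  have : Invertible x⁻¹ := invertibleOfNonzero (inv_ne_zero hx)
  have h := eval₂_reflect_mul_pow (RingHom.id K) x⁻¹ N f hf
  rw [invOf_eq_inv, inv_inv, ← eval, ← eval, inv_pow] at h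
  rw [← h]
  field_simp

theorem eval_one_reflect {R : Type*} [CommSemiring R] {N : ℕ} {f : R[X]} (hf : f.natDegree ≤ N) :
    (reflect N f).eval 1 = f.eval 1 := by
  simpa using @eval₂_reflect_mul_pow _ _ _ _ (RingHom.id R) 1 invertibleOne N f hf

theorem X_mul_derivative_C_mul_X_pow {R : Type*} [CommSemiring R] (r : R) (n : ℕ) :
    X * derivative (C r * X ^ n) = C (r * n) * X ^ n := by
  rw [derivative_C_mul_X_pow]
  cases n
  · simp
  · simp only [Nat.add_sub_cancel, C_mul, Nat.cast_succ, pow_succ]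
    ring

theorem natDegree_X_mul_derivative_le {R : Type*} [CommSemiring R] (f : R[X]) :
    (X * derivative f).natDegree ≤ f.natDegree := by
  by_cases hf : f.natDegree = 0
  · simp [derivative_of_natDegree_zero hf]
  · have := natDegree_derivative_lt hf
    have := natDegree_mul_le (p := X) (q := derivative f)
    have := natDegree_X_le (R := R)
    omega

theorem X_mul_derivative_reflect {R : Type*} [CommRing R] {N : ℕ} {f : R[X]}
    (hf : f.natDegree ≤ N) :
    X * derivative (reflect N f) = C (N : R) * reflect N f - reflect N (X * derivative f) := by
  refine induction_with_natDegree_le (fun f => X * derivative (reflect N f) =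
    C (N : R) * reflect N f - reflect N (X * derivative f)) N (by simp) ?_ ?_ f hf
  · intro n r _ hn
    rw [X_mul_derivative_C_mul_X_pow, reflect_C_mul_X_pow, reflect_C_mul_X_pow,
      X_mul_derivative_C_mul_X_pow, revAt_le hn, Nat.cast_sub hn, C_mul, C_mul, C_sub]
    ring
  · intro f g _ _ hf hg
    simp only [reflect_add, derivative_add, mul_add, hf, hg]
    ring

theorem two_mul_derivative_eval_one_of_reflect_eq_self {R : Type*} [CommRing R] {N : ℕ}
    {f : R[X]} (hf : f.natDegree ≤ N) (hpal : reflect N f = f) :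
    2 * f.derivative.eval 1 = N * f.eval 1 := by
  have h := congrArg (eval 1) (X_mul_derivative_reflect hf)
  rw [hpal, eval_sub, eval_one_reflect ((natDegree_X_mul_derivative_le f).trans hf)] at h
  simp only [eval_mul, eval_X, eval_C, one_mul] at h
  linear_combination h

theorem derivative_eval_neg_of_odd {R : Type*} [CommRing R] [IsDomain R] [Infinite R] {f : R[X]}
    (hodd : ∀ x, f.eval (-x) = -f.eval x) (x : R) :
    f.derivative.eval (-x) = f.derivative.eval x := by
  have hcomp : f.comp (-X) = -f := Polynomial.funext fun y => by simp [hodd]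
  have h := congrArg (fun g => (derivative g).eval x) hcomp
  simpa [derivative_comp] using h

theorem natDegree_comp_one_sub_X_le {R : Type*} [CommRing R] (p : R[X]) :
    (p.comp (1 - X)).natDegree ≤ p.natDegree := by
  have h : (1 - X : R[X]).natDegree ≤ 1 := by compute_degree
  exact natDegree_comp_le.trans (mul_le_of_le_one_right (Nat.zero_le _) h)

end Polynomial

section PeriodRelations

variable {K : Type*} [Field K] {w : ℕ} {P : K[X]}

theorem reflect_eq_self_of_odd_of_S_relation [Infinite K] (hodd : ∀ x, P.eval (-x) = -P.eval x)
    (hdeg : P.natDegree ≤ w) (hS : ∀ x : K, x ≠ 0 → P.eval x + x ^ w * P.eval (-1 / x) = 0) :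
    reflect w P = P := by
  refine sub_eq_zero.mp (eq_zero_of_eval_eq_zero_off_finite (Set.finite_singleton 0) ?_)
  intro x hx
  have h := hS x hx
  rw [neg_div, one_div, hodd] at h
  rw [eval_sub, eval_reflect hdeg hx]
  linear_combination -h

theorem U_relation_polynomial_of_reflect_eq_self [Infinite K] (hw : Even w)
    (hdeg : P.natDegree ≤ w) (hpal : reflect w P = P)
    (hU : ∀ x : K, x ≠ 0 → x ≠ 1 →
      P.eval x + x ^ w * P.eval (1 - 1 / x) + (x - 1) ^ w * P.eval (-1 / (x - 1)) = 0) :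
    P + reflect w (P.comp (1 - X)) + P.comp (1 - X) = 0 := by
  refine eq_zero_of_eval_eq_zero_off_finite (s := {0, 1}) (by simp) fun x hx => ?_
  obtain ⟨hx0, hx1⟩ : x ≠ 0 ∧ x ≠ 1 := by simpa [not_or] using hx
  have hcomp : P.eval (1 - x) = (x - 1) ^ w * P.eval (-1 / (x - 1)) := by
    nth_rewrite 1 [← hpal]
    rw [eval_reflect hdeg (sub_ne_zero.mpr hx1.symm), ← neg_sub, hw.neg_pow, inv_neg,
      ← one_div, neg_div]
  simp only [eval_add, eval_reflect ((natDegree_comp_one_sub_X_le P).trans hdeg) hx0, eval_comp,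
    eval_sub, eval_one, eval_X, hcomp]
  simpa [one_div] using hU x hx0 hx1

theorem eval_zero_add_eval_one_of_U_relation
    (hU : P + reflect w (P.comp (1 - X)) + P.comp (1 - X) = 0) (hdeg : P.natDegree < w) :
    P.eval 0 + P.eval 1 = 0 := by
  have h := congrArg (eval 0) hU
  have hlead : (reflect w (P.comp (1 - X))).eval 0 = 0 := by
    rw [← coeff_zero_eq_eval_zero, coeff_reflect, revAt_le (Nat.zero_le w), Nat.sub_zero]
    exact coeff_eq_zero_of_natDegree_lt ((natDegree_comp_one_sub_X_le P).trans_lt hdeg)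
  simpa [hlead] using h

theorem eval_neg_one_add_two_mul_eval_two_of_U_relation (hw : Even w) (hdeg : P.natDegree ≤ w)
    (hU : P + reflect w (P.comp (1 - X)) + P.comp (1 - X) = 0) :
    P.eval (-1) + 2 * P.eval 2 = 0 := by
  have h := congrArg (eval (-1)) hU
  rw [eval_add, eval_add, eval_reflect ((natDegree_comp_one_sub_X_le P).trans hdeg)
    (neg_ne_zero.mpr one_ne_zero), hw.neg_one_pow] at h
  simp only [inv_neg, inv_one, eval_comp, eval_sub, eval_one, eval_X, sub_neg_eq_add,
    one_add_one_eq_two, one_mul, eval_zero] at h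
  linear_combination h

end PeriodRelations

/-- If `P` is an odd polynomial of degree at most `k-3` satisfying the two
Eichler–Shimura period relations of weight `w = k-2`, then `P` has the "trivial zeros"
at `0, ±2, ±1/2`, and `P` together with its derivative vanishes at `±1`. -/
theorem trivial_zeros_of_period_relations
    (k : ℕ) (hk : 12 ≤ k) (hkeven : Even k)
    (P : Polynomial ℂ)
    (hodd : ∀ x : ℂ, P.eval (-x) = -P.eval x)
    (hdeg : P.natDegree ≤ k - 3)
    (hS : ∀ x : ℂ, x ≠ 0 →
      P.eval x + x ^ (k - 2) * P.eval (-1 / x) = 0)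
    (hU : ∀ x : ℂ, x ≠ 0 → x ≠ 1 →
      P.eval x + x ^ (k - 2) * P.eval (1 - 1 / x)
        + (x - 1) ^ (k - 2) * P.eval (-1 / (x - 1)) = 0) :
    P.eval 0 = 0 ∧ P.eval 2 = 0 ∧ P.eval (-2) = 0 ∧
    P.eval (1 / 2) = 0 ∧ P.eval (-(1 / 2)) = 0 ∧
    P.eval 1 = 0 ∧ P.derivative.eval 1 = 0 ∧
    P.eval (-1) = 0 ∧ P.derivative.eval (-1) = 0 := by
  have hw : Even (k - 2) := (Nat.even_sub (by omega)).2 (by simp [hkeven])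
  have hdegw : P.natDegree < k - 2 := by omega
  have hpal := reflect_eq_self_of_odd_of_S_relation hodd hdegw.le hS
  have hUpoly := U_relation_polynomial_of_reflect_eq_self hw hdegw.le hpal hU
  have P0 : P.eval 0 = 0 := by simpa [self_eq_neg] using hodd 0
  have P1 : P.eval 1 = 0 := by simpa [P0] using eval_zero_add_eval_one_of_U_relation hUpoly hdegw
  have Pm1 : P.eval (-1) = 0 := by rw [hodd, P1, neg_zero]
  have P2 : P.eval 2 = 0 := by
    simpa [Pm1] using eval_neg_one_add_two_mul_eval_two_of_U_relation hw hdegw.le hUpoly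
  have Phalf : P.eval (1 / 2) = 0 := by
    simpa [hpal, P2] using (eval_reflect hdegw.le (two_ne_zero (α := ℂ))).symm
  have D1 : P.derivative.eval 1 = 0 := by
    simpa [P1] using two_mul_derivative_eval_one_of_reflect_eq_self hdegw.le hpal
  refine ⟨P0, P2, by rw [hodd, P2, neg_zero], Phalf, by rw [hodd, Phalf, neg_zero], P1, D1, Pm1, ?_⟩
  rwa [derivative_eval_neg_of_odd hodd]
end

section
/- Let r : ℂ → ℂ be an entire function that takes real values on the real axis, let M ≥ 1 be an integer and N = 2M, and for z ≠ 0 set F_N(z) = r(z) + z^N·r(1/z). Let I(θ) = Im r(e^{iθ}), θ_j = π/(2M) + (π/M)·j, and let 𝓘_j = [θ_j, θ_{j+1}] ⊂ ℝ. If I(θ) ≠ 0 for all θ ∈ 𝓘_j, then there exists θ ∈ 𝓘_j with F_N(e^{iθ}) = 0. -/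
/-!
Write `z = e^{iθ}`. Since `r` is real on `ℝ`, Schwarz reflection gives `r (1/z) = r z̄ = conj (r z)`,
so `F_{2M}(z) = 2 z^M · Re (z^{-M} r(z))` and it suffices to find a zero of
`g θ = Re (e^{-iMθ} r(e^{iθ}))` on `𝓘_j`. At the endpoints `cos (Mθ) = 0`, so
`g = sin (Mθ) · Im r(e^{iθ})`, and `sin (Mθ)` changes sign from `θ_j` to `θ_{j+1} = θ_j + π/M`
while `Im r(e^{iθ})` does not. The intermediate value theorem concludes.
-/

open Real Complex ComplexConjugate Topology Filter Set

theorem exists_mem_Icc_eq_zero_of_mul_nonpos {α : Type*} [ConditionallyCompleteLinearOrder α]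
    [TopologicalSpace α] [OrderTopology α] [DenselyOrdered α] {f : α → ℝ} {a b : α}
    (hab : a ≤ b) (hf : ContinuousOn f (Icc a b)) (h : f a * f b ≤ 0) :
    ∃ x ∈ Icc a b, f x = 0 := by
  rcases mul_nonpos_iff.mp h with ⟨ha, hb⟩ | ⟨ha, hb⟩
  · exact intermediate_value_Icc' hab hf ⟨hb, ha⟩
  · exact intermediate_value_Icc hab hf ⟨ha, hb⟩

theorem Differentiable.apply_conj_of_forall_im_eq_zero {r : ℂ → ℂ} (hr : Differentiable ℂ r)
    (hreal : ∀ x : ℝ, (r x).im = 0) (z : ℂ) : r (conj z) = conj (r z) := by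
  have hs : Differentiable ℂ (conj ∘ r ∘ conj) := fun w => by
    simpa using (hr (conj w)).conj_conj
  have hfreq : ∃ᶠ w in 𝓝[≠] (0 : ℂ), r w = (conj ∘ r ∘ conj) w := by
    have hofReal : Tendsto ((↑) : ℝ → ℂ) (𝓝[≠] 0) (𝓝[≠] 0) :=
      continuous_ofReal.continuousWithinAt.tendsto_nhdsWithin fun _ _ ↦ by simp_all
    refine hofReal.frequently (Eventually.of_forall fun x => ?_).frequently
    simp [conj_eq_iff_im.mpr (hreal x)]
  have heq := AnalyticOnNhd.eq_of_frequently_eq (analyticOnNhd_univ_iff_differentiable.mpr hr)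
    (analyticOnNhd_univ_iff_differentiable.mpr hs) hfreq
  simpa using congrFun heq (conj z)

theorem re_conj_exp_mul_I_mul (x : ℝ) (c : ℂ) :
    (conj (exp (x * I)) * c).re = Real.cos x * c.re + Real.sin x * c.im := by
  rw [← exp_conj]
  simp [exp_re, exp_im, mul_re]

theorem add_sq_mul_conj_eq_zero {u c : ℂ} (hu : ‖u‖ = 1) (h : (conj u * c).re = 0) :
    c + u ^ 2 * conj c = 0 := by
  have hu' : u * conj u = 1 := by simp [mul_conj', hu]
  calc c + u ^ 2 * conj c = u * (conj u * c + conj (conj u * c)) := by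
        rw [map_mul, conj_conj]; linear_combination (-c) * hu'
    _ = 0 := by rw [add_conj, h]; simp

theorem apply_add_pow_mul_apply_inv_eq_zero_of_re_eq_zero {r : ℂ → ℂ} (hr : Differentiable ℂ r)
    (hreal : ∀ x : ℝ, (r x).im = 0) (n : ℕ) (θ : ℝ)
    (h : (conj (exp ((n * θ : ℝ) * I)) * r (exp (θ * I))).re = 0) :
    r (exp (θ * I)) + exp (θ * I) ^ (2 * n) * r (exp (θ * I))⁻¹ = 0 := by
  have hinv : (exp (θ * I))⁻¹ = conj (exp (θ * I)) := by
    rw [← Complex.exp_neg, ← exp_conj, map_mul, conj_ofReal, conj_I, mul_neg]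
  have hpow : exp (θ * I) ^ (2 * n) = exp ((n * θ : ℝ) * I) ^ 2 := by
    rw [pow_mul', ← Complex.exp_nat_mul]; push_cast; ring_nf
  rw [hinv, hr.apply_conj_of_forall_im_eq_zero hreal, hpow]
  exact add_sq_mul_conj_eq_zero (norm_exp_ofReal_mul_I _) h

/-- For an entire function `r` that is real on the real axis and `N = 2M`,
if `Im r(e^{iθ})` does not vanish on the interval `𝓘_j = [θ_j, θ_{j+1}]` with
`θ_j = π/(2M) + (π/M) j`, then `F_N(z) = r(z) + z^N r(1/z)` has a zero `e^{iθ}` with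
`θ ∈ 𝓘_j`. -/
theorem F_has_zero_in_interval
    (r : ℂ → ℂ) (hr : Differentiable ℂ r)
    (hreal : ∀ x : ℝ, (r x).im = 0)
    (M : ℕ) (hM : 1 ≤ M) (j : ℤ)
    (hI : ∀ θ ∈ Set.Icc (π / (2 * M) + π / M * j) (π / (2 * M) + π / M * (j + 1)),
      (r (Complex.exp ((θ : ℝ) * Complex.I))).im ≠ 0) :
    ∃ θ ∈ Set.Icc (π / (2 * M) + π / M * j) (π / (2 * M) + π / M * (j + 1)),
      r (Complex.exp ((θ : ℝ) * Complex.I))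
        + (Complex.exp ((θ : ℝ) * Complex.I)) ^ (2 * M)
          * r ((Complex.exp ((θ : ℝ) * Complex.I))⁻¹) = 0 := by
  set a := π / (2 * M) + π / M * j with ha
  have hM0 : (M : ℝ) ≠ 0 := Nat.cast_ne_zero.mpr (by omega)
  have hb : π / (2 * M) + π / M * (j + 1) = a + π / M := by ring
  rw [hb] at hI ⊢
  have hab : a ≤ a + π / M := le_add_of_nonneg_right (by positivity)
  have hMb : (M : ℝ) * (a + π / M) = M * a + π := by field_simp
  have hcos : Real.cos (M * a) = 0 := Real.cos_eq_zero_iff.mpr ⟨j, by rw [ha]; field_simp; ring⟩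
  have hsin : Real.sin (M * a) ^ 2 = 1 := by nlinarith [Real.sin_sq_add_cos_sq (M * a)]
  have hcirc : Continuous fun θ : ℝ => r (exp (θ * I)) := hr.continuous.comp (by fun_prop)
  set B := fun θ : ℝ => (r (exp (θ * I))).im
  set g := fun θ : ℝ => (conj (exp ((M * θ : ℝ) * I)) * r (exp (θ * I))).re
  have hB : 0 < B a * B (a + π / M) := by
    by_contra hle
    obtain ⟨θ, hθ, h0⟩ := exists_mem_Icc_eq_zero_of_mul_nonpos hab
      (continuous_im.comp hcirc).continuousOn (not_lt.mp hle)
    exact hI θ hθ h0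
  have hg : g a * g (a + π / M) = -Real.sin (M * a) ^ 2 * (B a * B (a + π / M)) := by
    simp only [g, B, re_conj_exp_mul_I_mul, hMb, Real.cos_add_pi, Real.sin_add_pi, hcos]
    ring
  have hgc : Continuous g :=
    continuous_re.comp ((continuous_conj.comp (by fun_prop)).mul hcirc)
  obtain ⟨θ, hθ, h0⟩ := exists_mem_Icc_eq_zero_of_mul_nonpos hab hgc.continuousOn
    (by rw [hg, hsin]; linarith)
  exact ⟨θ, hθ, apply_add_pow_mul_apply_inv_eq_zero_of_re_eq_zero hr hreal M θ h0⟩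
end

section
/- Let S(z) = sin(2πz) − sin(2π/z) for z ≠ 0, and let A = {z ∈ ℂ : 4/5 ≤ |z| ≤ 5/4}. Then S has exactly 10 zeros in A, counted with multiplicity. -/
/-!
Since `sin (2πz) - sin (2π/z) = 2 sin (π (z - z⁻¹)) cos (π (z + z⁻¹))`, it suffices to locate the
zeros of the two factors on the annulus. There `‖z + z⁻¹‖ < 5/2`, so `cos (π (z + z⁻¹))` vanishes
only where `z + z⁻¹ = w ∈ {±1/2, ±3/2}`, i.e. at the eight roots of `z² - w z + 1`, which lie on
the unit circle. If `z - z⁻¹` is real then so is `z`, and then `|z - z⁻¹| < 1` on the annulus;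
hence `sin (π (z - z⁻¹))` vanishes only where `z - z⁻¹ = 0`, i.e. at `z = ±1`. Dividing the simple
zeros out of the entire functions `sin (πu)` and `cos (πw)` leaves cofactors that do not vanish at
the relevant points, and multiplying by `z⁵` turns the ten linear factors in `z ± z⁻¹` into
`∏ (z - zᵢ)`.
-/

open Complex
open scoped Real ComplexConjugate

theorem differentiable_dslope {E : Type*} [NormedAddCommGroup E] [NormedSpace ℂ E]
    [CompleteSpace E] {f : ℂ → E} (hf : Differentiable ℂ f) (a : ℂ) :
    Differentiable ℂ (dslope f a) := by
  rw [← differentiableOn_univ] at hf ⊢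
  exact (Complex.differentiableOn_dslope Filter.univ_mem).2 hf

section SimpleZeros

variable {f : ℂ → ℂ}

theorem eq_sub_mul_dslope {a : ℂ} (hfa : f a = 0) (z : ℂ) : f z = (z - a) * dslope f a z := by
  simpa [hfa] using (sub_smul_dslope f a z).symm

theorem deriv_dslope_ne_zero (hf : Differentiable ℂ f) {a b : ℂ} (hab : b ≠ a) (hfa : f a = 0)
    (hfb : f b = 0) (hderiv : deriv f b ≠ 0) : deriv (dslope f a) b ≠ 0 := by
  have hFb : dslope f a b = 0 := by simp [dslope_of_ne f hab, slope_def_field, hfa, hfb]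
  intro h0
  apply hderiv
  rw [funext (eq_sub_mul_dslope hfa), deriv_fun_mul (by fun_prop)
    (differentiable_dslope hf a).differentiableAt]
  simp [hFb, h0]

theorem exists_eq_prod_sub_mul_of_simple_zeros (hf : Differentiable ℂ f) {n : ℕ}
    {p : Fin n → ℂ} (hp : Function.Injective p) (hzero : ∀ i, f (p i) = 0)
    (hsimple : ∀ i, deriv f (p i) ≠ 0) :
    ∃ g : ℂ → ℂ, Differentiable ℂ g ∧ (∀ z, f z = (∏ i, (z - p i)) * g z) ∧
      ∀ z, g z = 0 → f z = 0 ∧ z ∉ Set.range p := by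
  induction n generalizing f with
  | zero => exact ⟨f, hf, by simp, fun z hz => ⟨hz, by simp⟩⟩
  | succ n ih =>
    have hfac := eq_sub_mul_dslope (hzero 0)
    have hne : ∀ i : Fin n, p i.succ ≠ p 0 := fun i h => Fin.succ_ne_zero i (hp h)
    obtain ⟨g, hg, hFg, hgzero⟩ := ih (differentiable_dslope hf _)
      (hp.comp (Fin.succ_injective n))
      (fun i => by simp [dslope_of_ne f (hne i), slope_def_field, hzero])
      (fun i => deriv_dslope_ne_zero hf (hne i) (hzero 0) (hzero _) (hsimple _))
    refine ⟨g, hg, fun z => by rw [hfac, hFg, Fin.prod_univ_succ, mul_assoc]; rfl, fun z hz => ?_⟩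
    obtain ⟨hFz, hz'⟩ := hgzero z hz
    refine ⟨by rw [hfac, hFz, mul_zero], ?_⟩
    rintro ⟨i, rfl⟩
    cases i using Fin.cases with
    | zero => exact hsimple 0 (by rwa [dslope_same] at hFz)
    | succ i => exact hz' ⟨i, rfl⟩

end SimpleZeros

theorem deriv_sin_pi_mul_ne_zero {u : ℂ} (h : sin (π * u) = 0) :
    deriv (fun u : ℂ => sin (π * u)) u ≠ 0 := by
  have hd : HasDerivAt (fun u : ℂ => sin (π * u)) (cos (π * u) * π) u := by
    simpa using ((hasDerivAt_id u).const_mul (π : ℂ)).csin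
  rw [hd.deriv]
  have hcos : cos (π * u) ≠ 0 := fun h' => by simpa [h, h'] using sin_sq_add_cos_sq (π * u)
  simpa using And.intro hcos (ofReal_ne_zero.2 Real.pi_ne_zero)

theorem deriv_cos_pi_mul_ne_zero {w : ℂ} (h : cos (π * w) = 0) :
    deriv (fun w : ℂ => cos (π * w)) w ≠ 0 := by
  have hd : HasDerivAt (fun w : ℂ => cos (π * w)) (-sin (π * w) * π) w := by
    simpa using ((hasDerivAt_id w).const_mul (π : ℂ)).ccos
  rw [hd.deriv]
  have hsin : sin (π * w) ≠ 0 := fun h' => by simpa [h, h'] using sin_sq_add_cos_sq (π * w)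
  simpa using And.intro hsin (ofReal_ne_zero.2 Real.pi_ne_zero)

theorem exists_sin_pi_mul_eq_mul : ∃ s : ℂ → ℂ, Differentiable ℂ s ∧
    (∀ u, sin (π * u) = u * s u) ∧ ∀ u, s u = 0 → ∃ k : ℤ, k ≠ 0 ∧ u = k := by
  obtain ⟨s, hs, hfac, hzero⟩ := exists_eq_prod_sub_mul_of_simple_zeros (f := fun u => sin (π * u))
    (by fun_prop) (p := ![0]) (Function.injective_of_subsingleton _) (fun _ => by simp)
    (fun _ => deriv_sin_pi_mul_ne_zero (by simp))
  refine ⟨s, hs, fun u => by simpa using hfac u, fun u hu => ?_⟩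
  obtain ⟨hsin, hu0⟩ := hzero u hu
  obtain ⟨k, hk⟩ := sin_eq_zero_iff.1 hsin
  have hu : u = k := mul_left_cancel₀ (ofReal_ne_zero.2 Real.pi_ne_zero) (hk.trans (mul_comm _ _))
  exact ⟨k, by rintro rfl; exact hu0 ⟨0, by simp [hu]⟩, hu⟩

theorem mem_range_of_cos_pi_mul_eq_zero {w : ℂ} (hw : ‖w‖ < 5 / 2) (h : cos (π * w) = 0) :
    w ∈ Set.range ![1 / 2, -1 / 2, 3 / 2, -3 / 2] := by
  obtain ⟨k, hk⟩ := cos_eq_zero_iff.1 h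
  have hwk : w = (2 * k + 1) / 2 :=
    mul_left_cancel₀ (ofReal_ne_zero.2 Real.pi_ne_zero) (hk.trans (by ring))
  have hnorm : |2 * (k : ℝ) + 1| < 5 := by
    have : ‖((2 * k + 1 : ℝ) : ℂ)‖ / 2 < 5 / 2 := by simpa [hwk, norm_div] using hw
    rw [norm_real, Real.norm_eq_abs] at this
    linarith
  obtain ⟨hlo, hhi⟩ := abs_lt.1 hnorm
  have hlo' : -3 < k := by exact_mod_cast (by linarith : (-3 : ℝ) < k)
  have hhi' : k < 2 := by exact_mod_cast (by linarith : (k : ℝ) < 2)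
  interval_cases k
  · exact ⟨3, by simp [hwk]; norm_num⟩
  · exact ⟨1, by simp [hwk]; norm_num⟩
  · exact ⟨0, by simp [hwk]⟩
  · exact ⟨2, by simp [hwk]; norm_num⟩

theorem exists_cos_pi_mul_eq_mul : ∃ g : ℂ → ℂ, Differentiable ℂ g ∧
    (∀ w, cos (π * w) = (w - 1 / 2) * (w + 1 / 2) * (w - 3 / 2) * (w + 3 / 2) * g w) ∧
    ∀ w, ‖w‖ < 5 / 2 → g w ≠ 0 := by
  have hzero : ∀ i, cos (π * ![1 / 2, -1 / 2, 3 / 2, -3 / 2] i) = 0 := by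
    intro i
    rw [cos_eq_zero_iff]
    fin_cases i
    exacts [⟨0, by simp; ring⟩, ⟨-1, by simp; ring⟩, ⟨1, by simp; ring⟩, ⟨-2, by simp; ring⟩]
  obtain ⟨g, hg, hfac, hgzero⟩ := exists_eq_prod_sub_mul_of_simple_zeros
    (f := fun w => cos (π * w)) (by fun_prop) (p := ![1 / 2, -1 / 2, 3 / 2, -3 / 2])
    (by intro i j; fin_cases i <;> fin_cases j <;> norm_num) hzero
    (fun i => deriv_cos_pi_mul_ne_zero (hzero i))
  refine ⟨g, hg, fun w => ?_, fun w hw hgw => ?_⟩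
  · rw [hfac w, Fin.prod_univ_four]
    simp only [Matrix.cons_val]
    ring
  · obtain ⟨hcos, hw'⟩ := hgzero w hgw
    exact hw' (mem_range_of_cos_pi_mul_eq_zero hw hcos)

theorem im_eq_zero_of_im_sub_inv_eq_zero {z : ℂ} (h : (z - z⁻¹).im = 0) : z.im = 0 := by
  rw [sub_im, inv_im] at h
  have hfac : z.im * (1 + (normSq z)⁻¹) = 0 := by rw [← h]; ring
  have hpos : 0 < 1 + (normSq z)⁻¹ := by have := normSq_nonneg z; positivity
  exact (mul_eq_zero.1 hfac).resolve_right hpos.ne'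

theorem abs_sub_inv_lt_one {x : ℝ} (h1 : 4 / 5 ≤ |x|) (h2 : |x| ≤ 5 / 4) : |x - x⁻¹| < 1 := by
  have hx : 0 < |x| := by linarith
  have key : |x - x⁻¹| = |(|x| - |x|⁻¹)| := by
    rcases lt_or_gt_of_ne (abs_pos.1 hx) with h | h
    · rw [abs_of_neg h, inv_neg, ← abs_neg]; ring_nf
    · rw [abs_of_pos h]
  rw [key, abs_lt]
  have : |x| * |x|⁻¹ = 1 := mul_inv_cancel₀ hx.ne'
  constructor <;> nlinarith

theorem norm_add_inv_lt {z : ℂ} (h1 : 4 / 5 ≤ ‖z‖) (h2 : ‖z‖ ≤ 5 / 4) : ‖z + z⁻¹‖ < 5 / 2 := by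
  have hz : 0 < ‖z‖ := by linarith
  have : ‖z‖ * ‖z‖⁻¹ = 1 := mul_inv_cancel₀ hz.ne'
  calc ‖z + z⁻¹‖ ≤ ‖z‖ + ‖z‖⁻¹ := by simpa using norm_add_le z z⁻¹
    _ < 5 / 2 := by nlinarith

theorem sub_inv_ne_intCast {z : ℂ} (h1 : 4 / 5 ≤ ‖z‖) (h2 : ‖z‖ ≤ 5 / 4) {k : ℤ} (hk : k ≠ 0) :
    z - z⁻¹ ≠ k := by
  intro h
  have hz : z = z.re := ext rfl (by simpa using im_eq_zero_of_im_sub_inv_eq_zero (by simp [h]))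
  rw [hz, norm_real, Real.norm_eq_abs] at h1 h2
  rw [hz] at h
  have hre : z.re - z.re⁻¹ = k := by exact_mod_cast h
  have := abs_sub_inv_lt_one h1 h2
  rw [hre, ← Int.cast_abs, ← Int.cast_one, Int.cast_lt] at this
  exact hk (by simpa using this)

noncomputable def unitCircleRoot (w : ℝ) : ℂ := ⟨w / 2, √(4 - w ^ 2) / 2⟩

theorem normSq_unitCircleRoot {w : ℝ} (hw : |w| ≤ 2) : normSq (unitCircleRoot w) = 1 := by
  have : w ^ 2 ≤ 4 := by nlinarith [abs_le.1 hw, sq_abs w]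
  rw [unitCircleRoot, normSq_mk]
  nlinarith [Real.sq_sqrt (by linarith : 0 ≤ 4 - w ^ 2)]

theorem norm_unitCircleRoot {w : ℝ} (hw : |w| ≤ 2) : ‖unitCircleRoot w‖ = 1 := by
  rw [norm_def, normSq_unitCircleRoot hw, Real.sqrt_one]

theorem sub_unitCircleRoot_mul_sub_conj {w : ℝ} (hw : |w| ≤ 2) (z : ℂ) :
    (z - unitCircleRoot w) * (z - conj (unitCircleRoot w)) = z ^ 2 - w * z + 1 := by
  have hsum : unitCircleRoot w + conj (unitCircleRoot w) = w := by
    rw [add_conj, unitCircleRoot]; push_cast; ring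
  have hprod : unitCircleRoot w * conj (unitCircleRoot w) = 1 := by
    rw [mul_conj, normSq_unitCircleRoot hw, ofReal_one]
  linear_combination (-z) * hsum + hprod

noncomputable def annulusZeros : Fin 10 → ℂ :=
  ![1, -1, unitCircleRoot (1 / 2), conj (unitCircleRoot (1 / 2)),
    unitCircleRoot (-1 / 2), conj (unitCircleRoot (-1 / 2)),
    unitCircleRoot (3 / 2), conj (unitCircleRoot (3 / 2)),
    unitCircleRoot (-3 / 2), conj (unitCircleRoot (-3 / 2))]

theorem norm_annulusZeros (i : Fin 10) : ‖annulusZeros i‖ = 1 := by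
  fin_cases i <;> simp [annulusZeros] <;>
    exact norm_unitCircleRoot (abs_le.2 ⟨by norm_num, by norm_num⟩)

theorem prod_sub_annulusZeros (z : ℂ) :
    ∏ i, (z - annulusZeros i) = (z ^ 2 - 1) * (z ^ 2 - 1 / 2 * z + 1) * (z ^ 2 + 1 / 2 * z + 1) *
      (z ^ 2 - 3 / 2 * z + 1) * (z ^ 2 + 3 / 2 * z + 1) := by
  have hpair (w : ℝ) (hw : |w| ≤ 2) := sub_unitCircleRoot_mul_sub_conj hw z
  calc ∏ i, (z - annulusZeros i)
      = (z - 1) * (z + 1) *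
          ((z - unitCircleRoot (1 / 2)) * (z - conj (unitCircleRoot (1 / 2)))) *
          ((z - unitCircleRoot (-1 / 2)) * (z - conj (unitCircleRoot (-1 / 2)))) *
          ((z - unitCircleRoot (3 / 2)) * (z - conj (unitCircleRoot (3 / 2)))) *
          ((z - unitCircleRoot (-3 / 2)) * (z - conj (unitCircleRoot (-3 / 2)))) := by
        simp only [Fin.prod_univ_succ, Fin.prod_univ_zero, annulusZeros, Matrix.cons_val_zero,
          Matrix.cons_val_succ]
        ring
    _ = _ := by
        rw [hpair _ (by norm_num [abs_le]), hpair _ (by norm_num [abs_le]),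
          hpair _ (by norm_num [abs_le]), hpair _ (by norm_num [abs_le])]
        push_cast
        ring

theorem sin_two_pi_mul_sub_sin_two_pi_div (z : ℂ) :
    sin (2 * π * z) - sin (2 * π / z) = 2 * sin (π * (z - z⁻¹)) * cos (π * (z + z⁻¹)) := by
  rw [sin_sub_sin]; ring_nf

/-- The function `S(z) = sin(2πz) - sin(2π/z)` has exactly `10` zeros,
counted with multiplicity, in the annulus `A = {z : 4/5 ≤ |z| ≤ 5/4}`.  This is expressed
by a factorization `S(z) = ∏_{i<10} (z - zsᵢ) · h(z)` on `ℂ \ {0}`, where the ten points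
`zsᵢ` lie in `A` and `h` is holomorphic on `ℂ \ {0}` and nonvanishing on `A`. -/
theorem S_has_exactly_ten_zeros_in_annulus :
    ∃ (zs : Fin 10 → ℂ) (h : ℂ → ℂ),
      (∀ i, zs i ∈ {z : ℂ | 4 / 5 ≤ ‖z‖ ∧ ‖z‖ ≤ 5 / 4}) ∧
      DifferentiableOn ℂ h {(0 : ℂ)}ᶜ ∧
      (∀ z ∈ {z : ℂ | 4 / 5 ≤ ‖z‖ ∧ ‖z‖ ≤ 5 / 4}, h z ≠ 0) ∧
      (∀ z : ℂ, z ≠ 0 →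
        Complex.sin (2 * π * z) - Complex.sin (2 * π / z)
          = (∏ i, (z - zs i)) * h z) := by
  obtain ⟨s, hs, hsin, hs_zero⟩ := exists_sin_pi_mul_eq_mul
  obtain ⟨g, hg, hcos, hg_ne⟩ := exists_cos_pi_mul_eq_mul
  refine ⟨annulusZeros, fun z => 2 * s (z - z⁻¹) * g (z + z⁻¹) / z ^ 5, fun i => ?_, ?_, ?_, ?_⟩
  · simp [norm_annulusZeros]; norm_num
  · intro z hz
    apply DifferentiableAt.differentiableWithinAt
    fun_prop (disch := simpa using hz)
  · rintro z ⟨h1, h2⟩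
    have hz : z ≠ 0 := norm_pos_iff.1 (by linarith)
    have hs_ne : s (z - z⁻¹) ≠ 0 := fun h0 => by
      obtain ⟨k, hk, hzk⟩ := hs_zero _ h0
      exact sub_inv_ne_intCast h1 h2 hk hzk
    have hg_ne' := hg_ne _ (norm_add_inv_lt h1 h2)
    exact div_ne_zero (mul_ne_zero (mul_ne_zero two_ne_zero hs_ne) hg_ne') (pow_ne_zero 5 hz)
  · intro z hz
    rw [sin_two_pi_mul_sub_sin_two_pi_div, hsin, hcos, prod_sub_annulusZeros]
    field_simp
    ring
end

section
/- Let k ≥ 12 be an even integer and let a : ℕ → ℝ satisfy a(1) = 1 and |a(n)| ≤ d(n)·n^{(k−1)/2} for all n ≥ 1, where d(n) is the number of divisors of n. Then for every real σ ≥ 3k/4 the series L(σ) = Σ_{n=1}^∞ a(n)·n^{−σ} converges absolutely and |L(σ) − 1| ≤ 4·2^{−k/4}. -/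
open Real

private lemma card_divisors_le_self (n : ℕ) : n.divisors.card ≤ n := by
  have h : n.divisors ⊆ Finset.Ico 1 (n + 1) := Finset.filter_subset _ _
  simpa using Finset.card_le_card h

private lemma telescope_hasSum :
    HasSum (fun n : ℕ => 1 / ((n : ℝ) + 3/2) - 1 / ((n : ℝ) + 5/2)) (2/3) := by
  have hnn : ∀ i : ℕ, 0 ≤ 1 / ((i : ℝ) + 3/2) - 1 / ((i : ℝ) + 5/2) := by
    intro i
    have h1 : (0:ℝ) < (i : ℝ) + 3/2 := by positivity
    have h2 : (0:ℝ) < (i : ℝ) + 5/2 := by positivity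
    rw [sub_nonneg]
    apply one_div_le_one_div_of_le h1 (by linarith)
  rw [hasSum_iff_tendsto_nat_of_nonneg hnn]
  have hps : ∀ N : ℕ, ∑ i ∈ Finset.range N,
      (1 / ((i : ℝ) + 3/2) - 1 / ((i : ℝ) + 5/2)) = 2/3 - 1 / ((N : ℝ) + 3/2) := by
    intro N
    calc ∑ i ∈ Finset.range N, (1 / ((i : ℝ) + 3/2) - 1 / ((i : ℝ) + 5/2))
        = ∑ i ∈ Finset.range N,
            ((fun j : ℕ => 1 / ((j : ℝ) + 3/2)) i - (fun j : ℕ => 1 / ((j : ℝ) + 3/2)) (i+1)) := by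
          apply Finset.sum_congr rfl
          intro i _
          push_cast
          ring_nf
      _ = (fun j : ℕ => 1 / ((j : ℝ) + 3/2)) 0 - (fun j : ℕ => 1 / ((j : ℝ) + 3/2)) N :=
          Finset.sum_range_sub' _ N
      _ = 2/3 - 1 / ((N : ℝ) + 3/2) := by norm_num
  simp only [hps]
  have : Filter.Tendsto (fun N : ℕ => 1 / ((N : ℝ) + 3/2)) Filter.atTop (nhds 0) := by
    simp only [one_div]
    apply Filter.Tendsto.inv_tendsto_atTop
    exact Filter.tendsto_atTop_add_const_right _ _ tendsto_natCast_atTop_atTop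
  have h2 := (tendsto_const_nhds (x := (2/3 : ℝ)) (f := Filter.atTop (α := ℕ))).sub this
  simpa using h2

set_option maxHeartbeats 1000000

/-- If `a(1) = 1` and `|a(n)| ≤ d(n) n^{(k-1)/2}` (Deligne's bound), then
for `σ ≥ 3k/4` the Dirichlet series `L(σ) = Σ a(n) n^{-σ}` converges absolutely and
satisfies `|L(σ) - 1| ≤ 4 · 2^{-k/4}`. -/
theorem L_close_to_one
    (k : ℕ) (hk : 12 ≤ k) (hkeven : Even k)
    (a : ℕ → ℝ) (ha1 : a 1 = 1)
    (hbd : ∀ n : ℕ, 1 ≤ n →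
      |a n| ≤ (n.divisors.card : ℝ) * (n : ℝ) ^ (((k : ℝ) - 1) / 2))
    (σ : ℝ) (hσ : 3 * (k : ℝ) / 4 ≤ σ) :
    Summable (fun n : ℕ => |a (n + 1)| / ((n : ℝ) + 1) ^ σ) ∧
    |(∑' n : ℕ, a (n + 1) / ((n : ℝ) + 1) ^ σ) - 1| ≤ 4 * 2 ^ (-(k : ℝ) / 4) := by
  have hk9 : (9:ℝ) ≤ (k:ℝ) * 3 / 4 := by
    have : (12:ℝ) ≤ (k:ℝ) := by exact_mod_cast hk
    linarith
  -- basic bound : |a m| ≤ m ^ ((k+1)/2) for m ≥ 1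
  have key : ∀ m : ℕ, 1 ≤ m → |a m| ≤ (m : ℝ) ^ (((k : ℝ) + 1) / 2) := by
    intro m hm
    have hmpos : (0:ℝ) < (m:ℝ) := by exact_mod_cast hm
    calc |a m| ≤ (m.divisors.card : ℝ) * (m : ℝ) ^ (((k : ℝ) - 1) / 2) := hbd m hm
      _ ≤ (m : ℝ) * (m : ℝ) ^ (((k : ℝ) - 1) / 2) := by
          apply mul_le_mul_of_nonneg_right _ (Real.rpow_nonneg hmpos.le _)
          exact_mod_cast card_divisors_le_self m
      _ = (m : ℝ) ^ (((k : ℝ) + 1) / 2) := by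
          nth_rewrite 1 [← Real.rpow_one (m:ℝ)]
          rw [← Real.rpow_add hmpos]
          congr 1
          ring
  -- bound each term by (n+1)^((k+1)/2 - σ)
  have hterm : ∀ n : ℕ, |a (n + 1)| / ((n : ℝ) + 1) ^ σ
      ≤ ((n : ℝ) + 1) ^ (((k : ℝ) + 1) / 2 - σ) := by
    intro n
    have hpos : (0:ℝ) < (n:ℝ) + 1 := by positivity
    have h1 : |a (n + 1)| ≤ ((n : ℝ) + 1) ^ (((k : ℝ) + 1) / 2) := by
      have := key (n + 1) (by omega)
      push_cast at this
      exact this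
    rw [Real.rpow_sub hpos]
    exact div_le_div_of_nonneg_right h1 (Real.rpow_pos_of_pos hpos σ).le
  have hk12 : (12:ℝ) ≤ (k:ℝ) := by exact_mod_cast hk
  set e : ℝ := ((k : ℝ) + 1) / 2 - σ with he
  clear_value e
  have he2 : e + 2 ≤ 5/2 - (k:ℝ)/4 := by
    simp only [he]
    linarith
  have heneg : e ≤ -5/2 := by
    simp only [he]
    linarith
  -- summability
  have hg : Summable (fun n : ℕ => ((n : ℝ) + 1) ^ (-2 : ℝ)) := by
    have h0 := (Real.summable_nat_rpow (p := (-2:ℝ))).mpr (by norm_num)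
    have h1 := (summable_nat_add_iff 1).mpr h0
    exact h1.congr (fun n => by push_cast; ring_nf)
  have habs : Summable (fun n : ℕ => |a (n + 1)| / ((n : ℝ) + 1) ^ σ) := by
    apply Summable.of_nonneg_of_le (fun n => by positivity) _ hg
    intro n
    refine (hterm n).trans ?_
    apply Real.rpow_le_rpow_of_exponent_le (by push_cast; linarith [Nat.cast_nonneg (α := ℝ) n])
    linarith
  refine ⟨habs, ?_⟩
  set F : ℕ → ℝ := fun n => a (n + 1) / ((n : ℝ) + 1) ^ σ with hF
  have habs' : Summable (fun n : ℕ => |F n|) := by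
    apply habs.congr
    intro n
    rw [hF]
    rw [abs_div, abs_of_pos (Real.rpow_pos_of_pos (by positivity) σ)]
  have hFsum : Summable F := habs'.of_abs
  have hsplit : ∑' n : ℕ, F n = F 0 + ∑' n : ℕ, F (n + 1) := Summable.tsum_eq_zero_add hFsum
  have hF0 : F 0 = 1 := by
    simp only [hF]
    norm_num [ha1, Real.one_rpow]
  -- the telescoping majorant
  set T : ℕ → ℝ := fun n => (2:ℝ) ^ (e + 2) * (1 / ((n : ℝ) + 3/2) - 1 / ((n : ℝ) + 5/2))
    with hT
  have hTsum : HasSum T ((2:ℝ) ^ (e + 2) * (2/3)) := telescope_hasSum.mul_left _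
  have hptwise : ∀ n : ℕ, |F (n + 1)| ≤ T n := by
    intro n
    have hpos2 : (0:ℝ) < (n:ℝ) + 2 := by positivity
    have h1 : |F (n + 1)| ≤ ((n : ℝ) + 2) ^ e := by
      have := hterm (n + 1)
      have heq : |F (n + 1)| = |a (n + 1 + 1)| / ((↑(n+1) : ℝ) + 1) ^ σ := by
        rw [hF]
        rw [abs_div, abs_of_pos (Real.rpow_pos_of_pos (by positivity) σ)]
      rw [heq]
      refine this.trans ?_
      apply le_of_eq
      congr 1
      push_cast
      ring
    refine h1.trans ?_
    have hsplite : ((n : ℝ) + 2) ^ e = ((n : ℝ) + 2) ^ (e + 2) * ((n : ℝ) + 2) ^ (-2:ℝ) := by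
      rw [← Real.rpow_add hpos2]
      congr 1
      ring
    rw [hsplite, hT]
    have hb1 : ((n : ℝ) + 2) ^ (e + 2) ≤ (2:ℝ) ^ (e + 2) :=
      Real.rpow_le_rpow_of_nonpos (by norm_num) (by linarith [Nat.cast_nonneg (α := ℝ) n])
        (by linarith)
    have hb2 : ((n : ℝ) + 2) ^ (-2:ℝ) ≤ 1 / ((n : ℝ) + 3/2) - 1 / ((n : ℝ) + 5/2) := by
      have hpow : ((n:ℝ) + 2) ^ (-2:ℝ) = (((n:ℝ) + 2) ^ (2:ℕ))⁻¹ := by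
        rw [← Real.rpow_natCast ((n:ℝ) + 2) 2, ← Real.rpow_neg hpos2.le]
        norm_num
      have hexp : 1 / ((n:ℝ) + 3/2) - 1 / ((n:ℝ) + 5/2)
          = 1 / (((n:ℝ) + 3/2) * ((n:ℝ) + 5/2)) := by
        have p1 : ((n:ℝ) + 3/2) ≠ 0 := by positivity
        have p2 : ((n:ℝ) + 5/2) ≠ 0 := by positivity
        field_simp
        ring
      rw [hpow, hexp, inv_eq_one_div]
      apply one_div_le_one_div_of_le (by positivity)
      nlinarith [Nat.cast_nonneg (α := ℝ) n]
    calc ((n : ℝ) + 2) ^ (e + 2) * ((n : ℝ) + 2) ^ (-2:ℝ)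
        ≤ (2:ℝ) ^ (e + 2) * ((n : ℝ) + 2) ^ (-2:ℝ) := by
          apply mul_le_mul_of_nonneg_right hb1 (Real.rpow_nonneg hpos2.le _)
      _ ≤ (2:ℝ) ^ (e + 2) * (1 / ((n : ℝ) + 3/2) - 1 / ((n : ℝ) + 5/2)) := by
          apply mul_le_mul_of_nonneg_left hb2 (Real.rpow_nonneg (by norm_num) _)
  have hshift : Summable (fun n : ℕ => |F (n + 1)|) := (summable_nat_add_iff 1).mpr habs'
  have htail : |∑' n : ℕ, F (n + 1)| ≤ (2:ℝ) ^ (e + 2) * (2/3) := by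
    calc |∑' n : ℕ, F (n + 1)| ≤ ∑' n : ℕ, |F (n + 1)| := by
          simpa using norm_tsum_le_tsum_norm (f := fun n : ℕ => F (n + 1)) (by simpa using hshift)
      _ ≤ ∑' n : ℕ, T n := Summable.tsum_le_tsum hptwise hshift hTsum.summable
      _ = (2:ℝ) ^ (e + 2) * (2/3) := hTsum.tsum_eq
  -- the numeric bound
  have h52 : (2:ℝ) ^ ((5:ℝ)/2) ≤ 6 := by
    have hsq : ((2:ℝ) ^ ((5:ℝ)/2)) ^ (2:ℕ) = 32 := by
      rw [← Real.rpow_natCast ((2:ℝ) ^ ((5:ℝ)/2)) 2, ← Real.rpow_mul (by norm_num)]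
      norm_num
    nlinarith [Real.rpow_nonneg (by norm_num : (0:ℝ) ≤ 2) ((5:ℝ)/2)]
  have hfin : (2:ℝ) ^ (e + 2) * (2/3) ≤ 4 * 2 ^ (-(k : ℝ) / 4) := by
    have h1 : (2:ℝ) ^ (e + 2) ≤ (2:ℝ) ^ ((5:ℝ)/2 - (k:ℝ)/4) :=
      Real.rpow_le_rpow_of_exponent_le (by norm_num) he2
    have h2 : (2:ℝ) ^ ((5:ℝ)/2 - (k:ℝ)/4) = (2:ℝ) ^ ((5:ℝ)/2) * (2:ℝ) ^ (-(k:ℝ)/4) := by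
      rw [← Real.rpow_add (by norm_num)]
      congr 1
      ring
    have h3 : (0:ℝ) < (2:ℝ) ^ (-(k:ℝ)/4) := Real.rpow_pos_of_pos (by norm_num) _
    calc (2:ℝ) ^ (e + 2) * (2/3) ≤ (2:ℝ) ^ ((5:ℝ)/2 - (k:ℝ)/4) * (2/3) := by
          apply mul_le_mul_of_nonneg_right h1 (by norm_num)
      _ = ((2:ℝ) ^ ((5:ℝ)/2) * (2/3)) * (2:ℝ) ^ (-(k:ℝ)/4) := by rw [h2]; ring
      _ ≤ 4 * 2 ^ (-(k : ℝ) / 4) := by nlinarith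
  have : (∑' n : ℕ, a (n + 1) / ((n : ℝ) + 1) ^ σ) - 1 = ∑' n : ℕ, F (n + 1) := by
    rw [show (∑' n : ℕ, a (n + 1) / ((n : ℝ) + 1) ^ σ) = ∑' n : ℕ, F n from rfl, hsplit, hF0]
    ring
  rw [this]
  exact htail.trans hfin
end

section
/- Let k ≥ 12 be an even integer and let a : ℕ → ℝ satisfy a(1) = 1 and |a(n)| ≤ d(n)·n^{(k−1)/2} for all n ≥ 1, where d(n) is the number of divisors of n. Then the series Σ_{n=1}^∞ (a(n)/n^{k/2}) · ∫_{2πn}^∞ e^{−x} x^{k/2 − 1} dx converges absolutely, and |(2/Γ(k/2)) · Σ_{n=1}^∞ (a(n)/n^{k/2}) · ∫_{2πn}^∞ e^{−x} x^{k/2 − 1} dx| ≤ 2·√k·log(2k) + 1. -/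
/-!
Write `s = k/2` and `Γ(s, c) = ∫_c^∞ e^{-x} x^{s-1} dx`. Deligne's bound gives
`|a(n)| / n^s ≤ d(n) / √n`, and each term is controlled in two ways:

* `0 ≤ Γ(s, 2πn) ≤ Γ(s)`, so the first `N` terms contribute at most `Γ(s) Σ_{n ≤ N} d(n)/√n`.
  Since `d(n)/√n` is the Dirichlet convolution of `n^{-1/2}` with itself, this sum is
  `Σ_{d ≤ N} d^{-1/2} Σ_{e ≤ N/d} e^{-1/2} ≤ 2√N Σ_{d ≤ N} 1/d ≤ 2√N (log N + 1)`.
* `Γ(s, c) ≤ e^{-c/2} 2^s Γ(s)`, and with `e^{-π} ≤ 1/16`, `d(n)/√n ≤ 2^n` the `n`-th term is at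
  most `2^s Γ(s) 8^{-n}`; this gives absolute convergence, and a tail after `N` of at most
  `Γ(s) 2^s 8^{-N} / 7 ≤ Γ(s) / 7` as soon as `s ≤ 3N`.

Taking `N = ⌊k/6⌋ + 1` gives `s ≤ 3N` and `4N ≤ k`, whence `2√N (log N + 1) ≤ √k log k`.
-/

open Real MeasureTheory Finset

theorem Finset.sum_range_succ_eq_sum_Ioc {M : Type*} [AddCommMonoid M] (g : ℕ → M) (N : ℕ) :
    ∑ n ∈ range N, g (n + 1) = ∑ n ∈ Ioc 0 N, g n := by
  rw [range_eq_Ico, sum_Ico_add', ← Ico_add_one_add_one_eq_Ioc, zero_add]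

theorem sum_Ioc_inv_sqrt_le (M : ℕ) : ∑ m ∈ Ioc 0 M, (√m)⁻¹ ≤ 2 * √M := by
  induction M with
  | zero => simp
  | succ M ih =>
    rw [sum_Ioc_succ_top M.zero_le, Nat.cast_succ]
    have hpos : 0 < √((M : ℝ) + 1) := sqrt_pos.2 (by positivity)
    -- `1 = (√(M+1) - √M) (√(M+1) + √M) ≤ 2 √(M+1) (√(M+1) - √M)`
    have hstep : (√((M : ℝ) + 1))⁻¹ ≤ 2 * (√(M + 1) - √M) := by
      rw [inv_le_iff_one_le_mul₀' hpos]
      nlinarith [sq_sqrt (Nat.cast_nonneg (α := ℝ) M), sq_sqrt (by positivity : (0 : ℝ) ≤ M + 1)]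
    linarith

theorem sum_Ioc_inv_le_log_add_one (N : ℕ) : ∑ n ∈ Ioc 0 N, (n : ℝ)⁻¹ ≤ log N + 1 := by
  have h := harmonic_le_one_add_log N
  rw [harmonic_eq_sum_Icc] at h
  rw [← Icc_add_one_left_eq_Ioc, zero_add]
  push_cast at h
  linarith

namespace ArithmeticFunction

-- `n ↦ n^{-1/2}`; it vanishes at `0` only through the junk value `(√0)⁻¹ = 0`.
noncomputable def invSqrt : ArithmeticFunction ℝ := ⟨fun n => (√n)⁻¹, by simp⟩

theorem invSqrt_apply (n : ℕ) : invSqrt n = (√n)⁻¹ := rfl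

theorem invSqrt_mul_invSqrt_apply (n : ℕ) : (invSqrt * invSqrt) n = #n.divisors / √n := by
  rw [mul_apply, ← Nat.map_div_right_divisors, sum_map, div_eq_mul_inv, ← nsmul_eq_mul,
    ← sum_const]
  refine sum_congr rfl fun d hd => ?_
  change (√(d : ℝ))⁻¹ * (√((n / d : ℕ) : ℝ))⁻¹ = (√n)⁻¹
  rw [← mul_inv, ← sqrt_mul (Nat.cast_nonneg _), ← Nat.cast_mul,
    Nat.mul_div_cancel' (Nat.dvd_of_mem_divisors hd)]

end ArithmeticFunction

theorem sum_Ioc_card_divisors_div_sqrt_le (N : ℕ) :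
    ∑ n ∈ Ioc 0 N, (#n.divisors : ℝ) / √n ≤ 2 * √N * (log N + 1) := by
  simp_rw [← ArithmeticFunction.invSqrt_mul_invSqrt_apply,
    ArithmeticFunction.sum_Ioc_mul_eq_sum_sum, ArithmeticFunction.invSqrt_apply]
  have hinner (n : ℕ) : ∑ m ∈ Ioc 0 (N / n), (√m)⁻¹ ≤ 2 * (√N / √n) :=
    calc ∑ m ∈ Ioc 0 (N / n), (√m)⁻¹ ≤ 2 * √(N / n : ℕ) := sum_Ioc_inv_sqrt_le _
      _ ≤ 2 * √((N : ℝ) / n) := by gcongr; exact Nat.cast_div_le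
      _ = 2 * (√N / √n) := by rw [sqrt_div' _ (Nat.cast_nonneg _)]
  calc ∑ n ∈ Ioc 0 N, (√n)⁻¹ * ∑ m ∈ Ioc 0 (N / n), (√m)⁻¹
      ≤ ∑ n ∈ Ioc 0 N, (√n)⁻¹ * (2 * (√N / √n)) := by gcongr with n; exact hinner n
    _ = 2 * √N * ∑ n ∈ Ioc 0 N, (n : ℝ)⁻¹ := by
      rw [mul_sum]
      refine sum_congr rfl fun n _ => ?_
      have h : (√(n : ℝ))⁻¹ * (√n)⁻¹ = (n : ℝ)⁻¹ := by
        rw [← mul_inv, mul_self_sqrt n.cast_nonneg]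
      linear_combination 2 * √N * h
    _ ≤ 2 * √N * (log N + 1) :=
      mul_le_mul_of_nonneg_left (sum_Ioc_inv_le_log_add_one N) (by positivity)

theorem exp_neg_pi_le : exp (-π) ≤ 16⁻¹ := by
  rw [exp_neg]
  refine inv_anti₀ (by norm_num) ?_
  calc (16 : ℝ) ≤ 2.7 ^ 3 := by norm_num
    _ ≤ exp 1 ^ 3 := by gcongr; linarith [exp_one_gt_d9]
    _ = exp 3 := by rw [← exp_nat_mul]; norm_num
    _ ≤ exp π := exp_le_exp.2 pi_gt_three.le

noncomputable def upperIncompleteGamma (s c : ℝ) : ℝ :=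
  ∫ x in Set.Ioi c, exp (-x) * x ^ (s - 1)

section UpperIncompleteGamma

variable {s c : ℝ}

theorem upperIncompleteGamma_nonneg (hc : 0 ≤ c) : 0 ≤ upperIncompleteGamma s c :=
  setIntegral_nonneg measurableSet_Ioi fun _ hx =>
    mul_nonneg (exp_pos _).le (rpow_nonneg (hc.trans (le_of_lt hx)) _)

theorem upperIncompleteGamma_le_Gamma (hs : 0 < s) (hc : 0 ≤ c) :
    upperIncompleteGamma s c ≤ Gamma s := by
  rw [Gamma_eq_integral hs]
  refine setIntegral_mono_set (GammaIntegral_convergent hs) ?_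
    (Set.Ioi_subset_Ioi hc).eventuallyLE
  filter_upwards [self_mem_ae_restrict measurableSet_Ioi] with x hx
  exact mul_nonneg (exp_pos _).le (rpow_nonneg (le_of_lt hx) _)

-- On `(c, ∞)`, `e^{-x} ≤ e^{-c/2} e^{-x/2}`, and `∫₀^∞ e^{-x/2} x^{s-1} dx = 2^s Γ(s)`.
theorem upperIncompleteGamma_le_exp_mul (hs : 0 < s) (hc : 0 ≤ c) :
    upperIncompleteGamma s c ≤ exp (-(c / 2)) * (2 ^ s * Gamma s) := by
  have hhalf : IntegrableOn (fun x => x ^ (s - 1) * exp (-(2⁻¹ * x))) (Set.Ioi 0) := by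
    simpa using integrableOn_rpow_mul_exp_neg_mul_rpow (by linarith : -1 < s - 1) zero_lt_one
      (by norm_num : (0 : ℝ) < 2⁻¹)
  have hint : ∫ x in Set.Ioi 0, x ^ (s - 1) * exp (-(2⁻¹ * x)) = 2 ^ s * Gamma s := by
    rw [integral_rpow_mul_exp_neg_mul_Ioi hs (by norm_num), one_div, inv_inv]
  calc upperIncompleteGamma s c
      ≤ ∫ x in Set.Ioi c, exp (-(c / 2)) * (x ^ (s - 1) * exp (-(2⁻¹ * x))) := by
        refine setIntegral_mono_on
          ((GammaIntegral_convergent hs).mono_set (Set.Ioi_subset_Ioi hc))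
          ((hhalf.mono_set (Set.Ioi_subset_Ioi hc)).const_mul _) measurableSet_Ioi fun x hx => ?_
        have hexp : exp (-x) ≤ exp (-(c / 2)) * exp (-(2⁻¹ * x)) := by
          rw [← exp_add]
          exact exp_le_exp.2 (by linarith [Set.mem_Ioi.1 hx])
        calc exp (-x) * x ^ (s - 1)
            ≤ exp (-(c / 2)) * exp (-(2⁻¹ * x)) * x ^ (s - 1) := by
              gcongr; exact rpow_nonneg (hc.trans (le_of_lt hx)) _
          _ = _ := by ring
    _ ≤ exp (-(c / 2)) * (2 ^ s * Gamma s) := by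
        rw [integral_const_mul, ← hint]
        gcongr
        filter_upwards [self_mem_ae_restrict measurableSet_Ioi] with x hx
        exact mul_nonneg (rpow_nonneg (le_of_lt hx) _) (exp_pos _).le

theorem abs_mul_upperIncompleteGamma_le (hs : 0 < s) (hc : 0 ≤ c) {x B : ℝ} (hx : |x| ≤ B) :
    |x * upperIncompleteGamma s c| ≤ B * Gamma s := by
  rw [abs_mul, abs_of_nonneg (upperIncompleteGamma_nonneg hc)]
  exact mul_le_mul hx (upperIncompleteGamma_le_Gamma hs hc) (upperIncompleteGamma_nonneg hc)
    ((abs_nonneg x).trans hx)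

theorem abs_mul_upperIncompleteGamma_two_pi_mul_le (hs : 0 < s) {x : ℝ} {m : ℕ} (hm : 0 < m)
    (hx : |x| ≤ #m.divisors / √m) :
    |x * upperIncompleteGamma s (2 * π * m)| ≤ 2 ^ s * Gamma s * 8⁻¹ ^ m := by
  have hx' : |x| ≤ 2 ^ m :=
    calc |x| ≤ #m.divisors / √m := hx
      _ ≤ #m.divisors := div_le_self (by positivity) (one_le_sqrt.2 (by exact_mod_cast hm))
      _ ≤ m := by exact_mod_cast Nat.card_divisors_le_self m
      _ ≤ 2 ^ m := by exact_mod_cast Nat.lt_two_pow_self.le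
  have hΓ : upperIncompleteGamma s (2 * π * m) ≤ 16⁻¹ ^ m * (2 ^ s * Gamma s) := by
    refine (upperIncompleteGamma_le_exp_mul hs (by positivity)).trans ?_
    rw [show -(2 * π * m / 2) = m * -π by ring, exp_nat_mul]
    gcongr
    exact exp_neg_pi_le
  rw [abs_mul, abs_of_nonneg (upperIncompleteGamma_nonneg (by positivity))]
  calc |x| * upperIncompleteGamma s (2 * π * m) ≤ 2 ^ m * (16⁻¹ ^ m * (2 ^ s * Gamma s)) :=
        mul_le_mul hx' hΓ (upperIncompleteGamma_nonneg (by positivity)) (by positivity)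
    _ = 2 ^ s * Gamma s * 8⁻¹ ^ m := by rw [← mul_assoc, ← mul_pow]; norm_num; ring

end UpperIncompleteGamma

theorem abs_div_rpow_half_le_card_divisors_div_sqrt {k b : ℝ} {m : ℕ} (hm : 0 < m)
    (hb : |b| ≤ #m.divisors * (m : ℝ) ^ ((k - 1) / 2)) :
    |b / (m : ℝ) ^ (k / 2)| ≤ #m.divisors / √m := by
  have hm' : (0 : ℝ) < m := by exact_mod_cast hm
  rw [abs_div, abs_of_pos (rpow_pos_of_pos hm' _), div_le_iff₀ (rpow_pos_of_pos hm' _)]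
  calc |b| ≤ #m.divisors * (m : ℝ) ^ ((k - 1) / 2) := hb
    _ = #m.divisors / √m * (m : ℝ) ^ (k / 2) := by
      rw [sqrt_eq_rpow, div_mul_eq_mul_div, mul_div_assoc, ← rpow_sub hm']
      ring_nf

theorem abs_tsum_le_tsum_abs {f : ℕ → ℝ} (hf : Summable fun n => |f n|) :
    |∑' n, f n| ≤ ∑' n, |f n| := by
  simpa only [norm_eq_abs] using norm_tsum_le_tsum_norm (f := f) (by simpa only [norm_eq_abs])

theorem summable_and_tsum_le_of_le_geometric {g : ℕ → ℝ} {B q : ℝ} (hq0 : 0 ≤ q) (hq1 : q < 1)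
    (hg0 : ∀ n, 0 ≤ g n) (hg : ∀ n, g n ≤ B * q ^ (n + 1)) (N : ℕ) :
    Summable g ∧ ∑' n, g n ≤ ∑ n ∈ range N, g n + B * q ^ (N + 1) / (1 - q) := by
  have hgeom (M : ℕ) : HasSum (fun n => B * q ^ (M + 1) * q ^ n) (B * q ^ (M + 1) / (1 - q)) := by
    rw [div_eq_mul_inv]
    exact (hasSum_geometric_of_lt_one hq0 hq1).mul_left _
  have hg' (M n : ℕ) : g (n + M) ≤ B * q ^ (M + 1) * q ^ n := (hg _).trans_eq (by ring)
  have hsum : Summable g := (hgeom 0).summable.of_nonneg_of_le hg0 (hg' 0)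
  refine ⟨hsum, ?_⟩
  rw [← hsum.sum_add_tsum_nat_add N]
  gcongr
  exact hasSum_le (hg' N) ((summable_nat_add_iff N).2 hsum).hasSum (hgeom N)

theorem summable_and_tsum_abs_mul_upperIncompleteGamma_le {s : ℝ} (hs : 0 < s) {b : ℕ → ℝ}
    (hb : ∀ n : ℕ, |b n| ≤ #(n + 1).divisors / √((n : ℝ) + 1)) (N : ℕ) :
    Summable (fun n : ℕ => |b n * upperIncompleteGamma s (2 * π * ((n : ℝ) + 1))|) ∧
      ∑' n : ℕ, |b n * upperIncompleteGamma s (2 * π * ((n : ℝ) + 1))|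
        ≤ Gamma s * (2 * √N * (log N + 1) + 2 ^ s * 8⁻¹ ^ N / 7) := by
  have hb' (n : ℕ) : |b n| ≤ #(n + 1).divisors / √((n + 1 : ℕ) : ℝ) := by exact_mod_cast hb n
  have htail (n : ℕ) : |b n * upperIncompleteGamma s (2 * π * ((n : ℝ) + 1))|
      ≤ 2 ^ s * Gamma s * 8⁻¹ ^ (n + 1) := by
    exact_mod_cast abs_mul_upperIncompleteGamma_two_pi_mul_le hs n.succ_pos (hb' n)
  obtain ⟨hsum, hle⟩ := summable_and_tsum_le_of_le_geometric (by norm_num) (by norm_num)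
    (fun n => abs_nonneg _) htail N
  refine ⟨hsum, hle.trans ?_⟩
  have hhead : ∑ n ∈ range N, |b n * upperIncompleteGamma s (2 * π * ((n : ℝ) + 1))|
      ≤ Gamma s * (2 * √N * (log N + 1)) :=
    calc _ ≤ ∑ n ∈ range N, #(n + 1).divisors / √((n + 1 : ℕ) : ℝ) * Gamma s :=
          sum_le_sum fun n _ => abs_mul_upperIncompleteGamma_le hs (by positivity) (hb' n)
      _ = Gamma s * ∑ n ∈ Ioc 0 N, (#n.divisors : ℝ) / √n := by
          rw [← sum_mul, sum_range_succ_eq_sum_Ioc (fun m => (#m.divisors : ℝ) / √m), mul_comm]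
      _ ≤ _ := mul_le_mul_of_nonneg_left (sum_Ioc_card_divisors_div_sqrt_le N)
          (Gamma_pos_of_pos hs).le
  have hgeom : 2 ^ s * Gamma s * 8⁻¹ ^ (N + 1) / (1 - 8⁻¹) = Gamma s * (2 ^ s * 8⁻¹ ^ N / 7) := by
    rw [pow_succ]; ring
  linarith

theorem two_mul_sqrt_mul_log_add_one_le {N x : ℝ} (hN : 1 ≤ N) (hx : 4 * N ≤ x) :
    2 * √N * (log N + 1) ≤ √x * log x := by
  have hsqrt : 2 * √N ≤ √x := by
    calc 2 * √N = √(4 * N) := by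
          rw [sqrt_mul (by norm_num), show (4 : ℝ) = 2 ^ 2 by norm_num, sqrt_sq zero_le_two]
      _ ≤ √x := sqrt_le_sqrt hx
  have hlog : log N + 1 ≤ log x := by
    calc log N + 1 = log (N * exp 1) := by
          rw [log_mul (by positivity) (exp_ne_zero 1), log_exp]
      _ ≤ log x := log_le_log (by positivity) (by nlinarith [exp_one_lt_d9])
  exact mul_le_mul hsqrt hlog (by linarith [log_nonneg hN]) (sqrt_nonneg x)

theorem two_rpow_mul_inv_eight_pow_le_one {s : ℝ} {N : ℕ} (h : s ≤ 3 * N) :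
    (2 : ℝ) ^ s * 8⁻¹ ^ N ≤ 1 := by
  calc (2 : ℝ) ^ s * 8⁻¹ ^ N ≤ 2 ^ (3 * N : ℝ) * 8⁻¹ ^ N := by
        gcongr; norm_num
    _ = 1 := by
        rw [show (3 * N : ℝ) = ((3 * N : ℕ) : ℝ) by push_cast; ring, rpow_natCast, pow_mul,
          ← mul_pow]
        norm_num

theorem central_value_bound_general
    (k : ℕ) (hk : 12 ≤ k)
    (a : ℕ → ℝ)
    (hbd : ∀ n : ℕ, 1 ≤ n →
      |a n| ≤ (n.divisors.card : ℝ) * (n : ℝ) ^ (((k : ℝ) - 1) / 2)) :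
    Summable (fun n : ℕ => |a (n + 1) / ((n : ℝ) + 1) ^ ((k : ℝ) / 2)
      * ∫ x in Set.Ioi (2 * π * ((n : ℝ) + 1)), Real.exp (-x) * x ^ ((k : ℝ) / 2 - 1)|) ∧
    |2 / Real.Gamma ((k : ℝ) / 2)
      * ∑' n : ℕ, a (n + 1) / ((n : ℝ) + 1) ^ ((k : ℝ) / 2)
        * ∫ x in Set.Ioi (2 * π * ((n : ℝ) + 1)), Real.exp (-x) * x ^ ((k : ℝ) / 2 - 1)|
      ≤ 2 * Real.sqrt k * Real.log (2 * k) + 1 := by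
  simp only [← upperIncompleteGamma.eq_1]
  have hs : 0 < (k : ℝ) / 2 := by positivity
  have hcoef (n : ℕ) : |a (n + 1) / ((n : ℝ) + 1) ^ ((k : ℝ) / 2)|
      ≤ #(n + 1).divisors / √((n : ℝ) + 1) := by
    exact_mod_cast abs_div_rpow_half_le_card_divisors_div_sqrt n.succ_pos (hbd (n + 1) (by omega))
  set N := k / 6 + 1
  have hN : (1 : ℝ) ≤ N := by exact_mod_cast Nat.le_add_left 1 _
  have h4N : 4 * (N : ℝ) ≤ k := by exact_mod_cast (by omega : 4 * N ≤ k)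
  have h3N : (k : ℝ) / 2 ≤ 3 * N := by
    rw [div_le_iff₀ two_pos]; exact_mod_cast (by omega : k ≤ 3 * N * 2)
  obtain ⟨hsum, hle⟩ := summable_and_tsum_abs_mul_upperIncompleteGamma_le hs hcoef N
  refine ⟨hsum, ?_⟩
  have hhead : 2 * √N * (log N + 1) ≤ √k * log (2 * k) :=
    (two_mul_sqrt_mul_log_add_one_le hN h4N).trans (by gcongr; linarith)
  have htail := two_rpow_mul_inv_eight_pow_le_one h3N
  have hΓ := Gamma_pos_of_pos hs
  rw [abs_mul, abs_of_pos (by positivity), div_mul_eq_mul_div, div_le_iff₀ hΓ]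
  linarith [(abs_tsum_le_tsum_abs hsum).trans hle, mul_le_mul_of_nonneg_left hhead hΓ.le,
    mul_le_mul_of_nonneg_left htail hΓ.le]

/-- Under Deligne's bound, the series
`Σ_{n≥1} (a(n)/n^{k/2}) ∫_{2πn}^∞ e^{-x} x^{k/2-1} dx` converges absolutely and
`|(2/Γ(k/2)) Σ_{n≥1} (a(n)/n^{k/2}) ∫_{2πn}^∞ e^{-x} x^{k/2-1} dx| ≤ 2√k log(2k) + 1`.
(This quantity is the central value `L_f(k/2)` for a Hecke eigenform.) -/
theorem central_value_bound
    (k : ℕ) (hk : 12 ≤ k) (hkeven : Even k)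
    (a : ℕ → ℝ) (ha1 : a 1 = 1)
    (hbd : ∀ n : ℕ, 1 ≤ n →
      |a n| ≤ (n.divisors.card : ℝ) * (n : ℝ) ^ (((k : ℝ) - 1) / 2)) :
    Summable (fun n : ℕ => |a (n + 1) / ((n : ℝ) + 1) ^ ((k : ℝ) / 2)
      * ∫ x in Set.Ioi (2 * π * ((n : ℝ) + 1)), Real.exp (-x) * x ^ ((k : ℝ) / 2 - 1)|) ∧
    |2 / Real.Gamma ((k : ℝ) / 2)
      * ∑' n : ℕ, a (n + 1) / ((n : ℝ) + 1) ^ ((k : ℝ) / 2)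
        * ∫ x in Set.Ioi (2 * π * ((n : ℝ) + 1)), Real.exp (-x) * x ^ ((k : ℝ) / 2 - 1)|
      ≤ 2 * Real.sqrt k * Real.log (2 * k) + 1 :=
  central_value_bound_general k hk a hbd
end

section
/- Let k ≥ 80 be an integer with k ≡ 2 (mod 4), let w = k − 2, and let a : ℕ → ℝ satisfy a(1) = 1 and |a(n)| ≤ d(n)·n^{(k−1)/2} for all n ≥ 1, where d(n) is the number of divisors of n. For real σ > (k+1)/2 set L(σ) = Σ_{n=1}^∞ a(n)·n^{−σ}, and define q(z) = Σ_{m=0}^{⌊(w−6)/4⌋} (−1)^m · (2πz)^{2m+1}/(2m+1)! · L(w − 2m). Then for every complex z with |z| ≤ 5/4 one has |sin(2πz) − q(z)| ≤ 1/100. -/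
/-!
Put `X = 2πz` and `M = ⌊(w - 6)/4⌋`. Then `sin X - q(z) = Σ_m (-1)^m X^(2m+1)/(2m+1)! · ε_m`
with `ε_m = 1 - L(w - 2m)` for `m ≤ M` and `ε_m = 1` for `m > M`. Since `d(n) ≤ n`, Deligne's
bound gives `|a(n)| ≤ n^((k+1)/2)`, so comparing `L(w - 2m) - 1` with `Σ_{n ≥ 2} n⁻² = π²/6 - 1 < 1`
yields `|ε_m| ≤ 4^(m - M)` for every `m`. Hence the error is at most
`4^(-M) e^(2|X|) / 2 ≤ 4^(-18) e^16 / 2 < 1/100`.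
-/

open Real
open scoped Nat

theorem summable_odd_pow_div_factorial (x : ℝ) :
    Summable fun m : ℕ => x ^ (2 * m + 1) / (2 * m + 1)! :=
  (Real.summable_pow_div_factorial x).comp_injective fun m n h => by simpa using h

theorem tsum_odd_pow_div_factorial_le_exp {x : ℝ} (hx : 0 ≤ x) :
    ∑' m : ℕ, x ^ (2 * m + 1) / (2 * m + 1)! ≤ exp x := by
  rw [Real.exp_eq_exp_ℝ, NormedSpace.exp_eq_tsum_div]
  exact tsum_comp_le_tsum_of_inj (Real.summable_pow_div_factorial x) (fun n => by positivity)
    (i := fun m => 2 * m + 1) fun m n h => by simpa using h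

theorem hasSum_one_div_add_two_sq :
    HasSum (fun n : ℕ => 1 / ((n : ℝ) + 2) ^ 2) (π ^ 2 / 6 - 1) := by
  have h := (hasSum_nat_add_iff' 2).mpr hasSum_zeta_two
  norm_num [Finset.sum_range_succ] at h
  simpa only [one_div] using h

theorem card_divisors_mul_rpow_le (n : ℕ) (c : ℝ) :
    (n.divisors.card : ℝ) * (n : ℝ) ^ c ≤ (n : ℝ) ^ (c + 1) := by
  rcases n.eq_zero_or_pos with rfl | hn
  · simpa using Real.rpow_nonneg le_rfl (c + 1)
  rw [Real.rpow_add_one (by positivity), mul_comm]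
  gcongr
  exact_mod_cast Nat.card_divisors_le_self n

theorem rpow_div_rpow_le_of_add_le {x c σ : ℝ} (j : ℕ) (hx : 2 ≤ x) (hσ : c + j + 2 ≤ σ) :
    x ^ c / x ^ σ ≤ (1 / 2) ^ j * (1 / x ^ 2) := by
  have hx0 : 0 < x := by linarith
  calc x ^ c / x ^ σ = x ^ (c - σ) := (Real.rpow_sub hx0 c σ).symm
    _ ≤ x ^ (-((j + 2 : ℕ) : ℝ)) :=
      Real.rpow_le_rpow_of_exponent_le (by linarith) (by push_cast; linarith)
    _ = 1 / x ^ j * (1 / x ^ 2) := by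
      rw [Real.rpow_neg hx0.le, Real.rpow_natCast, pow_add]; field_simp
    _ ≤ (1 / 2) ^ j * (1 / x ^ 2) := by
      rw [one_div_pow]; gcongr

theorem abs_tsum_div_rpow_sub_one_le {a : ℕ → ℝ} (ha1 : a 1 = 1) {c σ : ℝ} (j : ℕ)
    (ha : ∀ n, 2 ≤ n → |a n| ≤ (n : ℝ) ^ c) (hσ : c + j + 2 ≤ σ) :
    |∑' n : ℕ, a (n + 1) / ((n : ℝ) + 1) ^ σ - 1| ≤ (1 / 2) ^ j := by
  set g : ℕ → ℝ := fun n => a (n + 1) / ((n : ℝ) + 1) ^ σ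
  have hbound : ∀ n, ‖g (n + 1)‖ ≤ (1 / 2) ^ j * (1 / ((n : ℝ) + 2) ^ 2) := by
    intro n
    have hn : (2 : ℝ) ≤ n + 2 := by linarith [n.cast_nonneg (α := ℝ)]
    have hpos : 0 < ((n : ℝ) + 2) ^ σ := by positivity
    calc ‖g (n + 1)‖ = |a (n + 2)| / ((n : ℝ) + 2) ^ σ := by
          simp only [g, Real.norm_eq_abs, abs_div, Nat.cast_add, Nat.cast_one]
          rw [add_assoc (n : ℝ), one_add_one_eq_two, abs_of_pos hpos]
      _ ≤ ((n : ℝ) + 2) ^ c / ((n : ℝ) + 2) ^ σ := by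
          gcongr; exact_mod_cast ha (n + 2) (by omega)
      _ ≤ _ := rpow_div_rpow_le_of_add_le j hn hσ
  have hdom := hasSum_one_div_add_two_sq.mul_left ((1 / 2) ^ j)
  have hg : Summable g := (summable_nat_add_iff 1).mp (hdom.summable.of_norm_bounded hbound)
  have hg0 : g 0 = 1 := by simp [g, ha1]
  rw [hg.tsum_eq_zero_add, hg0, add_sub_cancel_left, ← Real.norm_eq_abs]
  calc ‖∑' n, g (n + 1)‖ ≤ (1 / 2) ^ j * (π ^ 2 / 6 - 1) := tsum_of_norm_bounded hdom hbound
    _ ≤ (1 / 2) ^ j := mul_le_of_le_one_right (by positivity) (by nlinarith [pi_lt_d2, pi_pos])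

theorem norm_le_of_hasSum_sin_series_mul {X s : ℂ} {ε : ℕ → ℂ} {C r : ℝ} (hr : 0 < r)
    (hs : HasSum (fun m : ℕ => (-1) ^ m * X ^ (2 * m + 1) / (2 * m + 1)! * ε m) s)
    (hε : ∀ m, ‖ε m‖ ≤ C * r ^ (2 * m)) :
    ‖s‖ ≤ C / r * exp (r * ‖X‖) := by
  have hC : 0 ≤ C := by simpa using (norm_nonneg _).trans (hε 0)
  have hbound : ∀ m : ℕ, ‖(-1) ^ m * X ^ (2 * m + 1) / (2 * m + 1)! * ε m‖
      ≤ C / r * ((r * ‖X‖) ^ (2 * m + 1) / (2 * m + 1)!) := by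
    intro m
    rw [norm_mul, norm_div, norm_mul, norm_pow, norm_pow, norm_neg, norm_one, one_pow, one_mul,
      Complex.norm_natCast]
    calc ‖X‖ ^ (2 * m + 1) / (2 * m + 1)! * ‖ε m‖
        ≤ ‖X‖ ^ (2 * m + 1) / (2 * m + 1)! * (C * r ^ (2 * m)) := by gcongr; exact hε m
      _ = C / r * ((r * ‖X‖) ^ (2 * m + 1) / (2 * m + 1)!) := by
        field_simp; ring
  calc ‖s‖ ≤ ∑' m : ℕ, C / r * ((r * ‖X‖) ^ (2 * m + 1) / (2 * m + 1)!) :=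
        hs.norm_le_of_bounded ((summable_odd_pow_div_factorial _).mul_left _).hasSum hbound
    _ ≤ C / r * exp (r * ‖X‖) := by
      rw [tsum_mul_left]
      gcongr
      exact tsum_odd_pow_div_factorial_le_exp (by positivity)

theorem hasSum_mul_one_sub_ite {R : Type*} [Ring R] [TopologicalSpace R] [IsTopologicalAddGroup R]
    {f : ℕ → R} {s : R} (hf : HasSum f s) (N : ℕ) (ℓ : ℕ → R) :
    HasSum (fun m => f m * (1 - if m < N then ℓ m else 0))
      (s - ∑ m ∈ Finset.range N, f m * ℓ m) := by
  have hfin : HasSum (fun m => f m * if m < N then ℓ m else 0)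
      (∑ m ∈ Finset.range N, f m * if m < N then ℓ m else 0) :=
    hasSum_sum_of_ne_finset_zero fun m hm => by simp_all
  rw [Finset.sum_congr rfl fun m hm => by rw [if_pos (Finset.mem_range.mp hm)]] at hfin
  simpa only [mul_sub, mul_one] using hf.sub hfin

theorem abs_L_sub_one_le {k : ℕ} {a : ℕ → ℝ} {L : ℝ → ℝ} (ha1 : a 1 = 1)
    (hbd : ∀ n : ℕ, 1 ≤ n → |a n| ≤ (n.divisors.card : ℝ) * (n : ℝ) ^ (((k : ℝ) - 1) / 2))
    (hL : ∀ σ : ℝ, ((k : ℝ) + 1) / 2 < σ → L σ = ∑' n : ℕ, a (n + 1) / ((n : ℝ) + 1) ^ σ)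
    {σ : ℝ} (j : ℕ) (hσ : ((k : ℝ) + 1) / 2 + j + 2 ≤ σ) :
    |L σ - 1| ≤ (1 / 2) ^ j := by
  rw [hL σ (by linarith [j.cast_nonneg (α := ℝ)])]
  refine abs_tsum_div_rpow_sub_one_le ha1 j
    (fun n hn => (hbd n (by omega)).trans (card_divisors_mul_rpow_le n _)) ?_
  linarith

theorem norm_one_sub_ite_L_le {k M : ℕ} {a : ℕ → ℝ} {L : ℝ → ℝ} (ha1 : a 1 = 1)
    (hbd : ∀ n : ℕ, 1 ≤ n → |a n| ≤ (n.divisors.card : ℝ) * (n : ℝ) ^ (((k : ℝ) - 1) / 2))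
    (hL : ∀ σ : ℝ, ((k : ℝ) + 1) / 2 < σ → L σ = ∑' n : ℕ, a (n + 1) / ((n : ℝ) + 1) ^ σ)
    (hkM : k = 4 * M + 10) (m : ℕ) :
    ‖1 - if m < M + 1 then (L ((k - 2 - 2 * m : ℕ) : ℝ) : ℂ) else 0‖
      ≤ (1 / 2) ^ (2 * M) * 2 ^ (2 * m) := by
  by_cases hm : m < M + 1
  · obtain ⟨d, rfl⟩ : ∃ d, M = m + d := ⟨M - m, by omega⟩
    have hσ : ((k - 2 - 2 * m : ℕ) : ℝ) = 2 * m + 4 * d + 8 := by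
      rw [show k - 2 - 2 * m = 2 * m + 4 * d + 8 by omega]; push_cast; ring
    have hk : (k : ℝ) = 4 * m + 4 * d + 10 := by rw [hkM]; push_cast; ring
    rw [if_pos hm, ← Complex.ofReal_one, ← Complex.ofReal_sub, Complex.norm_real,
      Real.norm_eq_abs, abs_sub_comm]
    refine (abs_L_sub_one_le ha1 hbd hL (2 * d) ?_).trans_eq ?_
    · rw [hσ, hk]; push_cast; linarith
    · rw [mul_add, pow_add, mul_right_comm, ← mul_pow]
      norm_num
  · obtain ⟨d, rfl⟩ : ∃ d, m = M + d := ⟨m - M, by omega⟩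
    rw [if_neg hm, sub_zero, norm_one, mul_add, pow_add, ← mul_assoc, ← mul_pow]
    norm_num
    exact one_le_pow₀ (by norm_num)

theorem norm_two_pi_mul_le {z : ℂ} (hz : ‖z‖ ≤ 5 / 4) : ‖2 * (π : ℂ) * z‖ ≤ 8 := by
  rw [norm_mul, norm_mul, Complex.norm_real, Real.norm_of_nonneg pi_pos.le]
  norm_num
  nlinarith [pi_lt_d2, pi_pos, norm_nonneg z]

/-- For `k ≥ 80`, `k ≡ 2 (mod 4)`, `w = k - 2`, coefficients satisfying
Deligne's bound, `L(σ) = Σ a(n) n^{-σ}` and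
`q(z) = Σ_{m=0}^{⌊(w-6)/4⌋} (-1)^m (2πz)^{2m+1}/(2m+1)! · L(w-2m)`, one has
`|sin(2πz) - q(z)| ≤ 1/100` for all `|z| ≤ 5/4`. -/
theorem q_close_to_sin
    (k : ℕ) (hk : 80 ≤ k) (hk4 : k % 4 = 2)
    (a : ℕ → ℝ) (ha1 : a 1 = 1)
    (hbd : ∀ n : ℕ, 1 ≤ n →
      |a n| ≤ (n.divisors.card : ℝ) * (n : ℝ) ^ (((k : ℝ) - 1) / 2))
    (L : ℝ → ℝ)
    (hL : ∀ σ : ℝ, ((k : ℝ) + 1) / 2 < σ →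
      L σ = ∑' n : ℕ, a (n + 1) / ((n : ℝ) + 1) ^ σ)
    (q : ℂ → ℂ)
    (hq : ∀ z : ℂ, q z = ∑ m ∈ Finset.range ((k - 2 - 6) / 4 + 1),
      (-1) ^ m * (2 * (π : ℂ) * z) ^ (2 * m + 1) / ((2 * m + 1).factorial : ℂ)
        * ((L ((k - 2 - 2 * m : ℕ) : ℝ) : ℂ))) :
    ∀ z : ℂ, ‖z‖ ≤ 5 / 4 →
      ‖Complex.sin (2 * (π : ℂ) * z) - q z‖ ≤ 1 / 100 := by
  intro z hz
  set M := (k - 2 - 6) / 4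
  have hkM : k = 4 * M + 10 := by omega
  have hM : 18 ≤ M := by omega
  have hs := hasSum_mul_one_sub_ite (Complex.hasSum_sin (2 * π * z)) (M + 1)
    fun m => (L ((k - 2 - 2 * m : ℕ) : ℝ) : ℂ)
  rw [← hq] at hs
  calc ‖Complex.sin (2 * π * z) - q z‖
      ≤ (1 / 2) ^ (2 * M) / 2 * exp (2 * ‖2 * (π : ℂ) * z‖) :=
        norm_le_of_hasSum_sin_series_mul two_pos hs (norm_one_sub_ite_L_le ha1 hbd hL hkM)
    _ ≤ (1 / 2) ^ (2 * 18) / 2 * exp 16 := by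
      gcongr ?_ / 2 * exp ?_
      · exact pow_le_pow_of_le_one (by norm_num) (by norm_num) (by omega)
      · linarith [norm_two_pi_mul_le hz]
    _ ≤ (1 / 2) ^ (2 * 18) / 2 * 3 ^ 16 := by
      rw [show (16 : ℝ) = (16 : ℕ) * 1 by norm_num, Real.exp_nat_mul]
      gcongr
      exact exp_one_lt_three.le
    _ ≤ 1 / 100 := by norm_num
end

section
/- Let k ≥ 12 be an even integer, let w = k − 2, and let f be a cusp form of weight k for SL(2,ℤ). Define the period polynomial r_f(X) = ∫_0^∞ f(it)·(X − it)^w dt. Then for every complex X ≠ 0, r_f(X) + X^w·r_f(−1/X) = 0. -/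
open Real Complex UpperHalfPlane MatrixGroups MeasureTheory

/-!
Substituting `t ↦ 1/t` in the integral for `r_f(X)` and applying `f(i/t) = (it)^k f(it)` turns
its integrand into `-X^w f(it)(-1/X - it)^w`, using that `w` is even. The relation thus holds
pointwise for the integrands, and no convergence argument is needed.
-/

theorem SlashInvariantForm.apply_I_mul_inv {F : Type*} [FunLike F ℍ ℂ] {k : ℤ}
    [SlashInvariantFormClass F (⊤ : Subgroup SL(2, ℤ)) k] (f : F) {t : ℝ} (ht : 0 < t) :
    f ⟨Complex.I * (t⁻¹ : ℝ), by simpa using ht⟩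
      = (Complex.I * t) ^ k * f ⟨Complex.I * t, by simpa using ht⟩ := by
  have hS : ModularGroup.S • (⟨Complex.I * t, by simpa using ht⟩ : ℍ)
      = ⟨Complex.I * (t⁻¹ : ℝ), by simpa using ht⟩ := by
    ext
    rw [modular_S_smul]
    simp [mul_comm]
  rw [← hS, SlashInvariantForm.slash_action_eqn_SL'' f (Subgroup.mem_top _),
    ModularGroup.denom_S]

theorem integral_comp_inv_Ioi {E : Type*} [NormedAddCommGroup E] [NormedSpace ℝ E]
    (g : ℝ → E) : ∫ x in Set.Ioi 0, (x ^ 2)⁻¹ • g x⁻¹ = ∫ y in Set.Ioi 0, g y := by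
  have himage : (·⁻¹) '' Set.Ioi (0 : ℝ) = Set.Ioi 0 := by
    rw [Set.image_inv_eq_inv]
    ext x
    simp
  have := integral_image_eq_integral_abs_deriv_smul measurableSet_Ioi
    (fun x hx ↦ (hasDerivAt_inv (ne_of_gt hx)).hasDerivWithinAt) inv_injective.injOn g
  rw [himage] at this
  rw [this]
  refine setIntegral_congr_fun measurableSet_Ioi fun x _ ↦ ?_
  simp

theorem I_mul_pow_mul_sub_pow_div_sq {X t : ℂ} (hX : X ≠ 0) (ht : t ≠ 0) {w : ℕ} (hw : Even w) :
    (Complex.I * t) ^ (w + 2) * (X - Complex.I * t⁻¹) ^ w / t ^ 2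
      = -(X ^ w * (-1 / X - Complex.I * t) ^ w) := by
  have hleft : X - Complex.I * t⁻¹ = (Complex.I * X * t + 1) / (Complex.I * t) := by
    field_simp
    linear_combination -Complex.I_sq
  have hright : X * (-1 / X - Complex.I * t) = -(Complex.I * X * t + 1) := by
    field_simp
    ring
  rw [← mul_pow, hright, hw.neg_pow, hleft, div_pow, pow_add]
  field_simp
  rw [Complex.I_sq]
  ring

/-- Eichler–Shimura relation `r_f|(1+S) = 0`: for a cusp form `f` of even
weight `k ≥ 12` for `SL(2,ℤ)` and `w = k - 2`, the period polynomial
`r_f(X) = ∫_0^∞ f(it) (X - it)^w dt` satisfies `r_f(X) + X^w r_f(-1/X) = 0` for `X ≠ 0`. -/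
theorem period_relation_S
    (k : ℕ) (hk : 12 ≤ k) (hkeven : Even k)
    (f : CuspForm (⊤ : Subgroup SL(2, ℤ)) (k : ℤ))
    (F : ℝ → ℂ)
    (hF : ∀ (t : ℝ) (ht : 0 < t),
      F t = f (⟨Complex.I * t, by simpa using ht⟩ : UpperHalfPlane))
    (R : ℂ → ℂ)
    (hR : ∀ X : ℂ, R X = ∫ t in Set.Ioi (0 : ℝ), F t * (X - Complex.I * t) ^ (k - 2)) :
    ∀ X : ℂ, X ≠ 0 → R X + X ^ (k - 2) * R (-1 / X) = 0 := by
  intro X hX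
  obtain ⟨w, rfl⟩ : ∃ w, k = w + 2 := ⟨k - 2, by omega⟩
  have hw : Even w := (Nat.even_add.mp hkeven).mpr even_two
  rw [Nat.add_sub_cancel] at hR ⊢
  rw [add_eq_zero_iff_eq_neg, hR, hR, ← integral_comp_inv_Ioi, ← integral_const_mul,
    ← integral_neg]
  refine setIntegral_congr_fun measurableSet_Ioi fun t (ht : 0 < t) ↦ ?_
  rw [hF t⁻¹ (inv_pos.2 ht), SlashInvariantForm.apply_I_mul_inv f ht, ← hF t ht, zpow_natCast,
    Complex.real_smul]
  have hkernel := I_mul_pow_mul_sub_pow_div_sq hX (Complex.ofReal_ne_zero.2 ht.ne') hw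
  push_cast
  linear_combination F t * hkernel
end
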